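/- (Z-measurement rule for graph states.) Let G be a simple graph on Fin n, let a : Fin n, and let G' be the graph obtained from G by deleting all edges incident to a. Let P⁰ and P¹ be the coordinate projections on V_n defined by (P⁰ f)(v) = f(v) if v a = false and 0 otherwise, and (P¹ f)(v) = f(v) if v a = true and 0 otherwise. Then P⁰ ψ_G = P⁰ ψ_{G'} and P¹ ψ_G = (∏_{j ∈ N_G(a)} Z_j) (P¹ ψ_{G'}), where N_G(a) is the set of neighbours of a in G. That is, projecting the graph state onto a Z-basis outcome at vertex a yields the graph state of G with vertex a isolated, with Z corrections on the neighbours of a when the outcome is 1. -/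

import Mathlib

open scoped BigOperators

noncomputable section

/-- The `n`-qubit state space. -/
abbrev V (n : ℕ) : Type := (Fin n → Bool) → ℂ

/-- The numeric value (0 or 1) of a bit. -/
def bval (b : Bool) : ℕ := if b then 1 else 0

/-- A diagonal (multiplication) operator on `V n`. -/
def diagOp {n : ℕ} (g : (Fin n → Bool) → ℂ) : V n →ₗ[ℂ] V n where
  toFun f := fun v => g v * f v
  map_add' f h := by funext v; simp [mul_add]
  map_smul' c f := by funext v; simp; ring

@[simp] lemma diagOp_apply {n : ℕ} (g : (Fin n → Bool) → ℂ) (f : V n) (v : Fin n → Bool) :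
    diagOp g f v = g v * f v := rfl

lemma diagOp_commute {n : ℕ} (g h : (Fin n → Bool) → ℂ) :
    Commute (diagOp g) (diagOp h) := by
  apply LinearMap.ext; intro f; funext v
  simp [Module.End.mul_apply]; ring

/-- The Pauli `Z` operator on qubit `i`. -/
def Zop {n : ℕ} (i : Fin n) : V n →ₗ[ℂ] V n :=
  diagOp (fun v => (-1 : ℂ) ^ bval (v i))

/-- The Pauli `X` operator on qubit `i`. -/
def Xop {n : ℕ} (i : Fin n) : V n →ₗ[ℂ] V n where
  toFun f := fun v => f (Function.update v i (!(v i)))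
  map_add' f h := by funext v; simp
  map_smul' c f := by funext v; simp

/-- The controlled-phase operator on qubits `i`, `j`. -/
def CZop {n : ℕ} (i j : Fin n) : V n →ₗ[ℂ] V n :=
  diagOp (fun v => (-1 : ℂ) ^ (bval (v i) * bval (v j)))

/-- The controlled-phase operator associated to an (unordered) edge. -/
def CZe {n : ℕ} : Sym2 (Fin n) → (V n →ₗ[ℂ] V n) :=
  Sym2.lift ⟨fun i j => CZop i j, by
    intro i j
    apply LinearMap.ext; intro f; funext v
    simp [CZop, Nat.mul_comm (bval (v i))]⟩

lemma CZe_commute {n : ℕ} (e e' : Sym2 (Fin n)) : Commute (CZe e) (CZe e') := by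
  induction e using Sym2.ind with
  | _ i j =>
    induction e' using Sym2.ind with
    | _ k l => simpa [CZe, CZop] using diagOp_commute _ _

/-- The `n`-qubit plus state `|+⟩^{⊗ n}`, the constant function `2^{-n/2}`. -/
def ePlus (n : ℕ) : V n := fun _ => (((2 : ℝ) ^ (-(n : ℝ) / 2) : ℝ) : ℂ)

/-- The graph state of a simple graph `G` on `Fin n`: the product of the
controlled-phase gates over all edges of `G`, applied to the plus state. -/
def graphState {n : ℕ} (G : SimpleGraph (Fin n)) [DecidableRel G.Adj] : V n :=
  (G.edgeFinset.noncommProd CZe (fun e _ e' _ _ => CZe_commute e e')) (ePlus n)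

/-- `true ∧ true` test for both endpoints of an edge, as a Boolean predicate on `Sym2`. -/
def edgeAllTrue {n : ℕ} (v : Fin n → Bool) : Sym2 (Fin n) → Bool :=
  Sym2.lift ⟨fun i j => v i && v j, by intro i j; exact Bool.and_comm _ _⟩

/-- `m_G(v)`: the number of edges of `G` both of whose endpoints `i` satisfy `v i = true`. -/
def mG {n : ℕ} (G : SimpleGraph (Fin n)) [DecidableRel G.Adj] (v : Fin n → Bool) : ℕ :=
  (G.edgeFinset.filter (fun e => edgeAllTrue v e = true)).card

lemma Zop_commute {n : ℕ} (j k : Fin n) : Commute (Zop j) (Zop k) :=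
  diagOp_commute _ _

/-- The projector onto outcome `0` (i.e. `v a = false`) of a `Z`-basis
measurement of qubit `a`. -/
def P0op {n : ℕ} (a : Fin n) : V n →ₗ[ℂ] V n where
  toFun f := fun v => if v a = false then f v else 0
  map_add' f h := by funext v; by_cases hv : v a = false <;> simp [hv]
  map_smul' c f := by funext v; by_cases hv : v a = false <;> simp [hv]

/-- The projector onto outcome `1` (i.e. `v a = true`) of a `Z`-basis
measurement of qubit `a`. -/
def P1op {n : ℕ} (a : Fin n) : V n →ₗ[ℂ] V n where
  toFun f := fun v => if v a = true then f v else 0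
  map_add' f h := by funext v; by_cases hv : v a = true <;> simp [hv]
  map_smul' c f := by funext v; by_cases hv : v a = true <;> simp [hv]

/-- `diagOp` as a monoid hom from pointwise-product functions to endomorphisms. -/
def Dhom (n : ℕ) : ((Fin n → Bool) → ℂ) →* (V n →ₗ[ℂ] V n) where
  toFun := diagOp
  map_one' := by
    apply LinearMap.ext; intro f; funext v; simp [diagOp]
  map_mul' g h := by
    apply LinearMap.ext; intro f; funext v
    simp [diagOp, Module.End.mul_apply]; ring

lemma noncommProd_diagOp {n : ℕ} {ι : Type*} (s : Finset ι) (g : ι → (Fin n → Bool) → ℂ)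
    (comm) :
    s.noncommProd (fun i => diagOp (g i)) comm = diagOp (fun v => ∏ i ∈ s, g i v) := by
  have h2 : s.noncommProd (fun i => diagOp (g i)) comm
      = Dhom n (s.noncommProd g (fun _ _ _ _ _ => Commute.all _ _)) :=
    (Finset.map_noncommProd s g (fun _ _ _ _ _ => Commute.all _ _) (Dhom n)).symm
  rw [h2, Finset.noncommProd_eq_prod]
  show diagOp _ = _
  congr 1
  funext v
  simp [Finset.prod_apply]

/-- The diagonal function of the CZ gate of an edge. -/
def czg {n : ℕ} : Sym2 (Fin n) → (Fin n → Bool) → ℂ :=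
  Sym2.lift ⟨fun i j v => (-1 : ℂ) ^ (bval (v i) * bval (v j)), by
    intro i j; funext v
    show (-1 : ℂ) ^ (bval (v i) * bval (v j)) = (-1 : ℂ) ^ (bval (v j) * bval (v i))
    rw [Nat.mul_comm]⟩

lemma CZe_eq_diagOp {n : ℕ} (e : Sym2 (Fin n)) : CZe e = diagOp (czg e) := by
  induction e using Sym2.ind with
  | _ i j => rfl

lemma graphState_apply {n : ℕ} (G : SimpleGraph (Fin n)) [DecidableRel G.Adj]
    (v : Fin n → Bool) :
    graphState G v = (-1 : ℂ) ^ (mG G v) * ePlus n v := by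
  unfold graphState
  have : G.edgeFinset.noncommProd CZe (fun e _ e' _ _ => CZe_commute e e')
      = G.edgeFinset.noncommProd (fun e => diagOp (czg e))
        (fun e _ e' _ _ => diagOp_commute _ _) := by
    apply Finset.noncommProd_congr rfl
    intro e _; exact CZe_eq_diagOp e
  rw [this, noncommProd_diagOp G.edgeFinset czg (fun e _ e' _ _ => diagOp_commute _ _)]
  simp only [diagOp_apply]
  congr 1
  have key : ∀ e ∈ G.edgeFinset, czg e v = if edgeAllTrue v e then (-1 : ℂ) else 1 := by
    intro e _
    induction e using Sym2.ind with
    | _ i j =>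
      show (-1 : ℂ) ^ (bval (v i) * bval (v j)) = _
      have he : edgeAllTrue v s(i, j) = (v i && v j) := rfl
      rw [he]
      cases hi : v i <;> cases hj : v j <;> simp [bval]
  rw [Finset.prod_congr rfl key, Finset.prod_ite, Finset.prod_const, Finset.prod_const_one,
    mul_one]
  rfl

lemma Zprod_eq {n : ℕ} (a : Fin n) (G : SimpleGraph (Fin n)) [DecidableRel G.Adj] :
    (G.neighborFinset a).noncommProd Zop (fun j _ k _ _ => Zop_commute j k)
      = diagOp (fun v => ∏ j ∈ G.neighborFinset a, (-1 : ℂ) ^ bval (v j)) :=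
  noncommProd_diagOp _ _ _

/-- `Z`-measurement rule for graph states: projecting the graph
state of `G` onto a `Z`-basis outcome at vertex `a` yields the (projected) graph
state of the graph `G'` obtained by deleting all edges incident to `a`, with `Z`
corrections on the neighbours of `a` when the outcome is `1`. -/
theorem zMeasurement_rule {n : ℕ} (G G' : SimpleGraph (Fin n))
    [DecidableRel G.Adj] [DecidableRel G'.Adj] (a : Fin n)
    (hG' : ∀ x y, G'.Adj x y ↔ G.Adj x y ∧ x ≠ a ∧ y ≠ a) :
    P0op a (graphState G) = P0op a (graphState G') ∧
    P1op a (graphState G) =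
      ((G.neighborFinset a).noncommProd Zop (fun j _ k _ _ => Zop_commute j k))
        (P1op a (graphState G')) := by
  constructor
  · funext v
    show (if v a = false then graphState G v else 0)
        = (if v a = false then graphState G' v else 0)
    by_cases hv : v a = false
    · rw [if_pos hv, if_pos hv, graphState_apply, graphState_apply]
      have hfil : G.edgeFinset.filter (fun e => edgeAllTrue v e = true)
          = G'.edgeFinset.filter (fun e => edgeAllTrue v e = true) := by
        ext e
        induction e using Sym2.ind with
        | _ i j =>
          simp only [Finset.mem_filter, SimpleGraph.mem_edgeFinset, SimpleGraph.mem_edgeSet]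
          have hE : edgeAllTrue v s(i, j) = (v i && v j) := rfl
          rw [hE]
          constructor
          · rintro ⟨hadj, hb⟩
            have hvi : v i = true := by simpa using (Bool.and_eq_true _ _).mp hb |>.1
            have hvj : v j = true := by simpa using (Bool.and_eq_true _ _).mp hb |>.2
            refine ⟨(hG' i j).mpr ⟨hadj, ?_, ?_⟩, hb⟩
            · rintro rfl; rw [hv] at hvi; exact Bool.false_ne_true hvi
            · rintro rfl; rw [hv] at hvj; exact Bool.false_ne_true hvj
          · rintro ⟨hadj, hb⟩; exact ⟨((hG' i j).mp hadj).1, hb⟩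
      have : mG G v = mG G' v := by unfold mG; rw [hfil]
      rw [this]
    · rw [if_neg hv, if_neg hv]
  · rw [Zprod_eq]
    funext v
    show (if v a = true then graphState G v else 0)
        = (∏ j ∈ G.neighborFinset a, (-1 : ℂ) ^ bval (v j))
          * (if v a = true then graphState G' v else 0)
    by_cases hv : v a = true
    · rw [if_pos hv, if_pos hv, graphState_apply, graphState_apply]
      set T := (G.neighborFinset a).filter (fun j => v j = true) with hT
      have hP : ∏ j ∈ G.neighborFinset a, (-1 : ℂ) ^ bval (v j) = (-1 : ℂ) ^ T.card := by
        have : ∀ j ∈ G.neighborFinset a,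
            (-1 : ℂ) ^ bval (v j) = if v j = true then (-1 : ℂ) else 1 := by
          intro j _; cases hj : v j <;> simp [bval]
        rw [Finset.prod_congr rfl this, Finset.prod_ite, Finset.prod_const,
          Finset.prod_const_one, mul_one]
      have huni : G.edgeFinset.filter (fun e => edgeAllTrue v e = true)
          = (G'.edgeFinset.filter (fun e => edgeAllTrue v e = true))
            ∪ T.image (fun j => s(a, j)) := by
        ext e
        induction e using Sym2.ind with
        | _ i j =>
          simp only [Finset.mem_union, Finset.mem_filter, SimpleGraph.mem_edgeFinset,
            SimpleGraph.mem_edgeSet, Finset.mem_image, SimpleGraph.mem_neighborFinset, hT]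
          have hE : edgeAllTrue v s(i, j) = (v i && v j) := rfl
          rw [hE]
          constructor
          · rintro ⟨hadj, hb⟩
            have hvi : v i = true := by simpa using (Bool.and_eq_true _ _).mp hb |>.1
            have hvj : v j = true := by simpa using (Bool.and_eq_true _ _).mp hb |>.2
            by_cases hi : i = a
            · subst hi
              exact Or.inr ⟨j, ⟨hadj, hvj⟩, rfl⟩
            · by_cases hj : j = a
              · subst hj
                exact Or.inr ⟨i, ⟨hadj.symm, hvi⟩, Sym2.eq_swap⟩
              · exact Or.inl ⟨(hG' i j).mpr ⟨hadj, hi, hj⟩, hb⟩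
          · rintro (⟨hadj, hb⟩ | ⟨x, ⟨hax, hvx⟩, heq⟩)
            · exact ⟨((hG' i j).mp hadj).1, hb⟩
            · rcases Sym2.eq_iff.mp heq with ⟨rfl, rfl⟩ | ⟨rfl, rfl⟩
              · exact ⟨hax, by simp [hv, hvx]⟩
              · exact ⟨hax.symm, by simp [hv, hvx]⟩
      have hdisj : Disjoint (G'.edgeFinset.filter (fun e => edgeAllTrue v e = true))
          (T.image (fun j => s(a, j))) := by
        rw [Finset.disjoint_left]
        rintro e he1 he2
        obtain ⟨x, _, rfl⟩ := Finset.mem_image.mp he2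
        have : G'.Adj a x := by
          have := (Finset.mem_filter.mp he1).1
          rwa [SimpleGraph.mem_edgeFinset, SimpleGraph.mem_edgeSet] at this
        exact ((hG' a x).mp this).2.1 rfl
      have hinj : Set.InjOn (fun j => s(a, j)) T := by
        intro j hj k hk heq
        rcases Sym2.eq_iff.mp heq with ⟨_, h⟩ | ⟨rfl, rfl⟩
        · exact h
        · rfl
      have hM : mG G v = mG G' v + T.card := by
        unfold mG
        rw [huni, Finset.card_union_of_disjoint hdisj, Finset.card_image_of_injOn hinj]
      rw [hM, pow_add, hP]
      ring
    · rw [if_neg hv, if_neg hv, mul_zero]
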